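/- arXiv:1909.06665 — 5 statements merged into one kernel-verified Lean document; each statement's English description precedes it below -/
import Mathlib

section
/- Let L be a filtered cochain complex over 𝕂 whose filtration is descending, bounded above and complete, let r ≥ 1 be a fixed integer, and assume H⁰((F_{2^q}L)/(F_{min(r,2^{q+1})}L)) = 0 for every integer q ≥ 0 with 2^q < r. If x ∈ L⁰ (= F₁L⁰) and d_L(x) ∈ F_{2^k}L¹ for some integer k ≥ 0 with 2^k < r, then there exists y ∈ L^{-1} (= F₁L^{-1}) such that x − d_L(y) ∈ F_{2^k}L⁰. -/
/-- Lemma 3.4 of the paper, first part.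
A filtered cochain complex over a field `𝕂` is encoded as an internally graded
module `M = ⊕ₙ G n` with a degree-`+1` differential `d` squaring to zero, and a
descending, bounded-above (`F p = ⊤` for `p ≤ 1`), complete filtration
`F : ℤ → Submodule 𝕂 M` by graded subspaces which is preserved by `d`.
`Hⁱ((F_a L)/(F_b L)) = 0` is spelled out elementwise.
If `x` has degree `0` and `d x ∈ F (2^k)` for some `k` with `2^k < r`, then
there is `y` of degree `-1` with `x - d y ∈ F (2^k)`. -/
theorem goldman_millson_stmt0
    (𝕂 : Type*) [Field 𝕂]
    (M : Type*) [AddCommGroup M] [Module 𝕂 M]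
    -- the grading : M = ⊕ₙ G n
    (G : ℤ → Submodule 𝕂 M)
    (hG : DirectSum.IsInternal G)
    -- the differential, of degree +1, squaring to zero
    (d : M →ₗ[𝕂] M)
    (hd_deg : ∀ n : ℤ, ∀ x ∈ G n, d x ∈ G (n + 1))
    (hdd : ∀ x : M, d (d x) = 0)
    -- the filtration : descending, bounded above (F p = M for p ≤ 1),
    -- by graded subspaces, and preserved by d
    (F : ℤ → Submodule 𝕂 M)
    (hF_anti : Antitone F)
    (hF_top : ∀ p : ℤ, p ≤ 1 → F p = ⊤)
    (hF_graded : ∀ p : ℤ, F p = ⨆ n : ℤ, F p ⊓ G n)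
    (hdF : ∀ p : ℤ, ∀ x ∈ F p, d x ∈ F p)
    -- completeness of the filtration
    (hsep : ∀ x : M, (∀ p : ℤ, x ∈ F p) → x = 0)
    (hconv : ∀ x : ℕ → M, (∀ p : ℕ, 1 ≤ p → x (p + 1) - x p ∈ F (p : ℤ)) →
      ∃ y : M, ∀ p : ℕ, 1 ≤ p → y - x p ∈ F (p : ℤ))
    -- the fixed integer r ≥ 1
    (r : ℤ) (hr : 1 ≤ r)
    -- H⁰((F_{2^q} L)/(F_{min(r, 2^{q+1})} L)) = 0 for every q with 2^q < r
    (hH0 : ∀ q : ℕ, (2 : ℤ) ^ q < r →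
      ∀ x ∈ F ((2 : ℤ) ^ q) ⊓ G 0, d x ∈ F (min r ((2 : ℤ) ^ (q + 1))) →
        ∃ y ∈ F ((2 : ℤ) ^ q) ⊓ G (-1), x - d y ∈ F (min r ((2 : ℤ) ^ (q + 1))))
    -- the data : x of degree 0 with d x ∈ F (2^k), 2^k < r
    (k : ℕ) (hk : (2 : ℤ) ^ k < r)
    (x : M) (hx : x ∈ G 0) (hdx : d x ∈ F ((2 : ℤ) ^ k)) :
    ∃ y ∈ G (-1), x - d y ∈ F ((2 : ℤ) ^ k) := by

  have key : ∀ j q : ℕ, q + j = k → ∀ z : M, z ∈ F ((2:ℤ)^q) → z ∈ G 0 →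
      d z ∈ F ((2:ℤ)^k) → ∃ y ∈ G (-1), z - d y ∈ F ((2:ℤ)^k) := by
    intro j
    induction j with
    | zero =>
      intro q hq z hzF hzG hdz
      have hq' : q = k := by omega
      subst hq'
      exact ⟨0, (G (-1)).zero_mem, by simpa using hzF⟩
    | succ j ih =>
      intro q hq z hzF hzG hdz
      have hqk : q < k := by omega
      have h2 : (1:ℤ) < 2 := one_lt_two
      have h2q2k : (2:ℤ)^q < (2:ℤ)^k := pow_lt_pow_right₀ h2 hqk
      have h2q : (2:ℤ)^q < r := h2q2k.trans hk
      have h2q1 : (2:ℤ)^(q+1) ≤ (2:ℤ)^k := pow_le_pow_right₀ (by norm_num) (by omega)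
      have hmin : min r ((2:ℤ)^(q+1)) = (2:ℤ)^(q+1) :=
        min_eq_right (le_of_lt (lt_of_le_of_lt h2q1 hk))
      have hminle : min r ((2:ℤ)^(q+1)) ≤ (2:ℤ)^k := by rw [hmin]; exact h2q1
      obtain ⟨y₁, hy₁, hz'⟩ := hH0 q h2q z ⟨hzF, hzG⟩ (hF_anti hminle hdz)
      have hy₁G : y₁ ∈ G (-1) := hy₁.2
      have hz'F : z - d y₁ ∈ F ((2:ℤ)^(q+1)) := by rwa [hmin] at hz'
      have hz'G : z - d y₁ ∈ G 0 := sub_mem hzG (by simpa using hd_deg (-1) y₁ hy₁G)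
      have hdz' : d (z - d y₁) ∈ F ((2:ℤ)^k) := by
        rw [map_sub, hdd, sub_zero]; exact hdz
      obtain ⟨y₂, hy₂G, hfin⟩ := ih (q+1) (by omega) (z - d y₁) hz'F hz'G hdz'
      refine ⟨y₁ + y₂, add_mem hy₁G hy₂G, ?_⟩
      rw [map_add, sub_add_eq_sub_sub]
      exact hfin
  have hx1 : x ∈ F ((2:ℤ)^0) := by
    rw [pow_zero, hF_top 1 le_rfl]; trivial
  exact key k 0 (by omega) x hx1 hx hdx
end

section
/- Let L be a filtered cochain complex over 𝕂 whose filtration is descending, bounded above and complete, let r ≥ 1 be a fixed integer, and assume H⁰((F_{2^q}L)/(F_{min(r,2^{q+1})}L)) = 0 for every integer q ≥ 0 with 2^q < r. If x ∈ L⁰ (= F₁L⁰) and d_L(x) ∈ F_rL¹, then there exists y ∈ L^{-1} (= F₁L^{-1}) such that x − d_L(y) ∈ F_rL⁰. -/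
/-!
Improve a candidate primitive one filtration step at a time: if `x - d y ∈ F_a`, then
`x - d y` is a cocycle modulo `F_b` (because `d x ∈ F_b` and `d ∘ d = 0`), so the vanishing of
`H⁰(F_a / F_b)` corrects `y` to a primitive of `x` modulo `F_b`. Along the levels
`min r 2^q`, which start at `1` (where `F_1 = L`) and reach `r` after finitely many steps,
this gives a primitive modulo `F_r`.
-/

section FilteredComplex

variable {R M : Type*} [Ring R] [AddCommGroup M] [Module R M]
  (G F : ℤ → Submodule R M) (d : M →ₗ[R] M)

/-- `Hⁱ(F_a / F_b) = 0`, for the complex graded by `G` with differential `d`. -/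
def QuotientCohomologyVanishes (i a b : ℤ) : Prop :=
  ∀ x ∈ F a ⊓ G i, d x ∈ F b → ∃ y ∈ F a ⊓ G (i - 1), x - d y ∈ F b

variable {G F d}

theorem quotientCohomologyVanishes_self (i a : ℤ) : QuotientCohomologyVanishes G F d i a a :=
  fun x _ _ => ⟨0, zero_mem _, by simpa using ‹x ∈ F a ⊓ G i›.1⟩

theorem exists_sub_map_mem_of_quotientCohomologyVanishes
    (hd_deg : ∀ n : ℤ, ∀ x ∈ G n, d x ∈ G (n + 1)) (hdd : ∀ x : M, d (d x) = 0)
    {i a b : ℤ} (hab : QuotientCohomologyVanishes G F d i a b)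
    {x y : M} (hx : x ∈ G i) (hdx : d x ∈ F b) (hy : y ∈ G (i - 1)) (hxy : x - d y ∈ F a) :
    ∃ y' ∈ G (i - 1), x - d y' ∈ F b := by
  have hdy : d y ∈ G i := by simpa using hd_deg (i - 1) y hy
  have hd_sub : d (x - d y) = d x := by simp [hdd y]
  obtain ⟨z, ⟨-, hz⟩, hxyz⟩ :=
    hab (x - d y) ⟨hxy, sub_mem hx hdy⟩ (hd_sub ▸ hdx)
  refine ⟨y + z, add_mem hy hz, ?_⟩
  rwa [map_add, ← sub_sub]

theorem exists_sub_map_mem_of_forall_quotientCohomologyVanishes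
    (hd_deg : ∀ n : ℤ, ∀ x ∈ G n, d x ∈ G (n + 1)) (hdd : ∀ x : M, d (d x) = 0)
    {i : ℤ} {a : ℕ → ℤ} (ha : ∀ q, QuotientCohomologyVanishes G F d i (a q) (a (q + 1)))
    {x : M} (hx : x ∈ G i) (hx₀ : x ∈ F (a 0)) (hdx : ∀ q, d x ∈ F (a q)) (q : ℕ) :
    ∃ y ∈ G (i - 1), x - d y ∈ F (a q) := by
  induction q with
  | zero => exact ⟨0, zero_mem _, by simpa using hx₀⟩
  | succ q ih =>
    obtain ⟨y, hy, hxy⟩ := ih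
    exact exists_sub_map_mem_of_quotientCohomologyVanishes hd_deg hdd (ha q) hx (hdx _) hy hxy

end FilteredComplex

theorem le_two_pow_toNat (r : ℤ) : r ≤ 2 ^ r.toNat := by
  have h : (r.toNat : ℤ) ≤ 2 ^ r.toNat := by exact_mod_cast Nat.lt_two_pow_self.le
  omega

theorem goldman_millson_stmt1_general
    (𝕂 : Type*) [Field 𝕂]
    (M : Type*) [AddCommGroup M] [Module 𝕂 M]
    (G : ℤ → Submodule 𝕂 M)
    (d : M →ₗ[𝕂] M)
    (hd_deg : ∀ n : ℤ, ∀ x ∈ G n, d x ∈ G (n + 1))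
    (hdd : ∀ x : M, d (d x) = 0)
    (F : ℤ → Submodule 𝕂 M)
    (hF_anti : Antitone F)
    (hF_top : ∀ p : ℤ, p ≤ 1 → F p = ⊤)
    (r : ℤ)
    (hH0 : ∀ q : ℕ, (2 : ℤ) ^ q < r →
      ∀ x ∈ F ((2 : ℤ) ^ q) ⊓ G 0, d x ∈ F (min r ((2 : ℤ) ^ (q + 1))) →
        ∃ y ∈ F ((2 : ℤ) ^ q) ⊓ G (-1), x - d y ∈ F (min r ((2 : ℤ) ^ (q + 1))))
    (x : M) (hx : x ∈ G 0) (hdx : d x ∈ F r) :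
    ∃ y ∈ G (-1), x - d y ∈ F r := by
  have hvanish : ∀ q : ℕ,
      QuotientCohomologyVanishes G F d 0 (min r (2 ^ q)) (min r (2 ^ (q + 1))) := by
    intro q
    rcases lt_or_ge ((2 : ℤ) ^ q) r with hlt | hge
    · rw [min_eq_right hlt.le]
      exact hH0 q hlt
    · rw [min_eq_left hge, min_eq_left (hge.trans (pow_le_pow_right₀ one_le_two q.le_succ))]
      exact quotientCohomologyVanishes_self 0 r
  have hx₀ : x ∈ F (min r (2 ^ 0)) := by
    rw [hF_top _ (by simp)]
    trivial
  obtain ⟨y, hy, hxy⟩ := exists_sub_map_mem_of_forall_quotientCohomologyVanishes hd_deg hdd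
    hvanish hx hx₀ (fun _ => hF_anti (min_le_left _ _) hdx) r.toNat
  rw [min_eq_left (le_two_pow_toNat r)] at hxy
  exact ⟨y, by simpa using hy, hxy⟩

/-- Lemma 3.4 of the paper, second part.
Same setting as Statement 0: if `x` has degree `0` and `d x ∈ F r`, then there
is `y` of degree `-1` with `x - d y ∈ F r`. -/
theorem goldman_millson_stmt1
    (𝕂 : Type*) [Field 𝕂]
    (M : Type*) [AddCommGroup M] [Module 𝕂 M]
    (G : ℤ → Submodule 𝕂 M)
    (hG : DirectSum.IsInternal G)
    (d : M →ₗ[𝕂] M)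
    (hd_deg : ∀ n : ℤ, ∀ x ∈ G n, d x ∈ G (n + 1))
    (hdd : ∀ x : M, d (d x) = 0)
    (F : ℤ → Submodule 𝕂 M)
    (hF_anti : Antitone F)
    (hF_top : ∀ p : ℤ, p ≤ 1 → F p = ⊤)
    (hF_graded : ∀ p : ℤ, F p = ⨆ n : ℤ, F p ⊓ G n)
    (hdF : ∀ p : ℤ, ∀ x ∈ F p, d x ∈ F p)
    (hsep : ∀ x : M, (∀ p : ℤ, x ∈ F p) → x = 0)
    (hconv : ∀ x : ℕ → M, (∀ p : ℕ, 1 ≤ p → x (p + 1) - x p ∈ F (p : ℤ)) →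
      ∃ y : M, ∀ p : ℕ, 1 ≤ p → y - x p ∈ F (p : ℤ))
    (r : ℤ) (hr : 1 ≤ r)
    (hH0 : ∀ q : ℕ, (2 : ℤ) ^ q < r →
      ∀ x ∈ F ((2 : ℤ) ^ q) ⊓ G 0, d x ∈ F (min r ((2 : ℤ) ^ (q + 1))) →
        ∃ y ∈ F ((2 : ℤ) ^ q) ⊓ G (-1), x - d y ∈ F (min r ((2 : ℤ) ^ (q + 1))))
    (x : M) (hx : x ∈ G 0) (hdx : d x ∈ F r) :
    ∃ y ∈ G (-1), x - d y ∈ F r :=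
  goldman_millson_stmt1_general 𝕂 M G d hd_deg hdd F hF_anti hF_top r hH0 x hx hdx
end

section
/- Let L be a filtered cochain complex over 𝕂 with descending, bounded above filtration, and let r ≥ 1 be a fixed integer. Assume H⁰((F₁L)/(F_qL)) = 0 and H^{−1}((F₁L)/(F_qL)) = 0 for every q that is a power of 2 smaller than r as well as for q = r. Then for every integer u ≥ 0 with 2^u < r one has H⁰((F_{2^u}L)/(F_{min(2^{u+1},r)}L)) = 0; explicitly, for every a ∈ F_{2^u}L⁰ with d_L(a) ∈ F_{min(2^{u+1},r)}L¹ there exists z ∈ F_{2^u}L^{−1} such that a − d_L(z) ∈ F_{min(2^{u+1},r)}L⁰. -/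
/-- Let `L` be a filtered cochain complex with descending,
bounded-above filtration and `r ≥ 1`. Assume `H⁰((F₁L)/(F_qL)) = 0` and
`H⁻¹((F₁L)/(F_qL)) = 0` for every `q` which is a power of `2` smaller than `r`,
as well as for `q = r`. Then for every `u ≥ 0` with `2^u < r` one has
`H⁰((F_{2^u}L)/(F_{min(2^{u+1}, r)}L)) = 0`, elementwise. -/
theorem goldman_millson_stmt4
    (𝕂 : Type*) [Field 𝕂]
    (M : Type*) [AddCommGroup M] [Module 𝕂 M]
    (G : ℤ → Submodule 𝕂 M)
    (hG : DirectSum.IsInternal G)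
    (d : M →ₗ[𝕂] M)
    (hd_deg : ∀ i : ℤ, ∀ x ∈ G i, d x ∈ G (i + 1))
    (hdd : ∀ x : M, d (d x) = 0)
    (F : ℤ → Submodule 𝕂 M)
    (hF_anti : Antitone F)
    (hF_top : ∀ p : ℤ, p ≤ 1 → F p = ⊤)
    (hF_graded : ∀ p : ℤ, F p = ⨆ i : ℤ, F p ⊓ G i)
    (hdF : ∀ p : ℤ, ∀ x ∈ F p, d x ∈ F p)
    (r : ℤ) (hr : 1 ≤ r)
    -- H⁰((F₁L)/(F_qL)) = 0 and H⁻¹((F₁L)/(F_qL)) = 0 for q any power of 2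
    -- smaller than r and for q = r
    (hH : ∀ q : ℤ, ((∃ k : ℕ, q = (2 : ℤ) ^ k) ∧ q < r) ∨ q = r →
      (∀ x ∈ F 1 ⊓ G 0, d x ∈ F q →
        ∃ y ∈ F 1 ⊓ G (-1), x - d y ∈ F q) ∧
      (∀ x ∈ F 1 ⊓ G (-1), d x ∈ F q →
        ∃ y ∈ F 1 ⊓ G (-2), x - d y ∈ F q)) :
    ∀ u : ℕ, (2 : ℤ) ^ u < r →
      ∀ a ∈ F ((2 : ℤ) ^ u) ⊓ G 0, d a ∈ F (min ((2 : ℤ) ^ (u + 1)) r) →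
        ∃ z ∈ F ((2 : ℤ) ^ u) ⊓ G (-1),
          a - d z ∈ F (min ((2 : ℤ) ^ (u + 1)) r) := by
  intro u hu a ha hda
  set q : ℤ := min ((2 : ℤ) ^ (u + 1)) r with hq
  have hFtop : F 1 = ⊤ := hF_top 1 le_rfl
  -- q is a power of 2 smaller than r, or q = r
  have hqH : ((∃ k : ℕ, q = (2 : ℤ) ^ k) ∧ q < r) ∨ q = r := by
    rcases lt_or_ge ((2 : ℤ) ^ (u + 1)) r with h | h
    · left
      constructor
      · exact ⟨u + 1, by simp [hq, min_eq_left h.le]⟩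
      · simpa [hq, min_eq_left h.le] using h
    · right; simp [hq, min_eq_right h]
  -- apply H⁰ vanishing at q to a
  obtain ⟨ha1, ha0⟩ := ha
  have ha1' : a ∈ F 1 ⊓ G 0 := ⟨by simp [hFtop], ha0⟩
  obtain ⟨y, ⟨hy1, hym1⟩, hayq⟩ := (hH q hqH).1 a ha1' hda
  -- d y ∈ F (2^u)
  have hqle : (2 : ℤ) ^ u ≤ q :=
    le_min (pow_le_pow_right₀ (by norm_num) (Nat.le_succ u)) hu.le
  have hayF : a - d y ∈ F ((2 : ℤ) ^ u) := hF_anti hqle hayq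
  have hdyF : d y ∈ F ((2 : ℤ) ^ u) := by
    have : a - (a - d y) ∈ F ((2 : ℤ) ^ u) := Submodule.sub_mem _ ha1 hayF
    simpa using this
  -- apply H⁻¹ vanishing at 2^u to y
  have hpH : ((∃ k : ℕ, (2 : ℤ) ^ u = (2 : ℤ) ^ k) ∧ (2 : ℤ) ^ u < r) ∨
      (2 : ℤ) ^ u = r := Or.inl ⟨⟨u, rfl⟩, hu⟩
  obtain ⟨w, ⟨hw1, hwm2⟩, hywF⟩ := (hH ((2 : ℤ) ^ u) hpH).2 y
    ⟨by simp [hFtop], hym1⟩ hdyF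
  refine ⟨y - d w, ⟨hywF, ?_⟩, ?_⟩
  · exact Submodule.sub_mem _ hym1 (by simpa using hd_deg (-2) w hwm2)
  · have : d (y - d w) = d y := by simp [map_sub, hdd w]
    rw [this]
    exact hayq
end

section
/- Let (L, d_L) and (L̃, d_{L̃}) be filtered cochain complexes over 𝕂 with descending, bounded above filtrations, let r ≥ 1 be a fixed integer, and let ψ: L → L̃ be a filtration-preserving chain map satisfying condition (★_r). Assume moreover that H⁰((F_{2^q}L)/(F_{min(r,2^{q+1})}L)) = 0 for every integer q ≥ 0 with 2^q < r, and that H^{−1}((F₁L̃)/(F_rL̃)) = 0. Then for every b ∈ F_rL̃⁰ with d_{L̃}(b) ∈ F_{2r}L̃¹ there exist a ∈ F_rL⁰ with d_L(a) ∈ F_{r+1}L¹ and y ∈ F_rL̃^{−1} such that b − ψ(a) + d_{L̃}(y) ∈ F_{r+1}L̃⁰. -/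
/-!
Applying `(★_r)` to the pair `(0, b)` produces `x ∈ F₁L⁰` and `y ∈ F₁L̃⁻¹` with
`b - ψ x + d y ∈ F_{r+1}` and `d x ∈ F_{r+1}`; it remains to push `x` into `F_r` and `y` into
`F_r` without disturbing these congruences. The dyadic vanishing hypotheses compose to
`H⁰(F₁L/F_rL) = 0`, so `x - d y₀ ∈ F_r` for some `y₀ ∈ F₁L⁻¹`, and replacing `(x, y)` by
`(x - d y₀, y - ψ y₀)` keeps `b - ψ x + d y` unchanged because `ψ` is a chain map. Finally
`H⁻¹(F₁L̃/F_rL̃) = 0` replaces `y` by a cochain in `F_r` with the same differential.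
-/

/-- Condition `(★_r)` for a filtration-preserving chain map `ψ` between two
filtered cochain complexes (encoded via internal gradings `G`, `G'` and
filtrations `F`, `F'`). -/
def StarCondition (𝕂 : Type*) [Field 𝕂] {M N : Type*}
    [AddCommGroup M] [Module 𝕂 M] [AddCommGroup N] [Module 𝕂 N]
    (r : ℤ) (dM : M →ₗ[𝕂] M) (dN : N →ₗ[𝕂] N) (ψ : M →ₗ[𝕂] N)
    (G : ℤ → Submodule 𝕂 M) (G' : ℤ → Submodule 𝕂 N)
    (F : ℤ → Submodule 𝕂 M) (F' : ℤ → Submodule 𝕂 N) : Prop :=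
  ∀ p n : ℤ, ∀ a ∈ F p ⊓ G n, ∀ b ∈ F' p ⊓ G' (n - 1),
    dM a ∈ F (p + r) → ψ a - dN b ∈ F' (p + r) →
      ∃ x ∈ F (p - r + 1) ⊓ G (n - 1), ∃ y ∈ F' (p - r + 1) ⊓ G' (n - 2),
        dM x ∈ F p ∧ ψ x - dN y ∈ F' p ∧
          a - dM x ∈ F (p + 1) ∧ b - ψ x + dN y ∈ F' (p + 1)

section HVanishes

variable {R M : Type*} [Ring R] [AddCommGroup M] [Module R M]
  {d : M →ₗ[R] M} {G F : ℤ → Submodule R M} {i a b c : ℤ}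

/-- `HVanishes d G F i a b` says `Hⁱ(F_a/F_b) = 0`, without forming the quotient complex. -/
def HVanishes (d : M →ₗ[R] M) (G F : ℤ → Submodule R M) (i a b : ℤ) : Prop :=
  ∀ x ∈ F a ⊓ G i, d x ∈ F b → ∃ y ∈ F a ⊓ G (i - 1), x - d y ∈ F b

theorem HVanishes.of_le (hF : Antitone F) (hba : b ≤ a) : HVanishes d G F i a b :=
  fun _ hx _ => ⟨0, zero_mem _, by simpa using hF hba hx.1⟩

theorem sub_map_mem_of_mem_pred (hd : ∀ n, ∀ x ∈ G n, d x ∈ G (n + 1))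
    {x y : M} (hx : x ∈ G i) (hy : y ∈ G (i - 1)) : x - d y ∈ G i :=
  sub_mem hx (by simpa using hd _ _ hy)

theorem HVanishes.trans (hF : Antitone F) (hd : ∀ n, ∀ x ∈ G n, d x ∈ G (n + 1))
    (hdd : ∀ x, d (d x) = 0) (hab : a ≤ b) (hbc : b ≤ c)
    (h₁ : HVanishes d G F i a b) (h₂ : HVanishes d G F i b c) : HVanishes d G F i a c := by
  intro x ⟨hxF, hxG⟩ hdx
  obtain ⟨y₁, ⟨hy₁F, hy₁G⟩, hxy₁⟩ := h₁ x ⟨hxF, hxG⟩ (hF hbc hdx)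
  have hdxy₁ : d (x - d y₁) ∈ F c := by simpa [hdd] using hdx
  obtain ⟨y₂, ⟨hy₂F, hy₂G⟩, hxy₂⟩ :=
    h₂ _ ⟨hxy₁, sub_map_mem_of_mem_pred hd hxG hy₁G⟩ hdxy₁
  refine ⟨y₁ + y₂, ⟨add_mem hy₁F (hF hab hy₂F), add_mem hy₁G hy₂G⟩, ?_⟩
  simpa [sub_sub] using hxy₂

theorem HVanishes.one_of_dyadic (hF : Antitone F) (hd : ∀ n, ∀ x ∈ G n, d x ∈ G (n + 1))
    (hdd : ∀ x, d (d x) = 0) {r : ℤ}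
    (h : ∀ q : ℕ, (2 : ℤ) ^ q < r → HVanishes d G F i (2 ^ q) (min r (2 ^ (q + 1)))) :
    HVanishes d G F i 1 r := by
  have hq : ∀ q : ℕ, HVanishes d G F i 1 (min r (2 ^ q)) := by
    intro q
    induction q with
    | zero => exact .of_le hF (by simp)
    | succ q ih =>
      rcases le_or_gt r (2 ^ q) with hle | hlt
      · rwa [min_eq_left (hle.trans (pow_le_pow_right₀ one_le_two q.le_succ)),
          ← min_eq_left hle]
      · rw [min_eq_right hlt.le] at ih
        exact ih.trans hF hd hdd (one_le_pow₀ one_le_two) (le_min hlt.le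
          (pow_le_pow_right₀ one_le_two q.le_succ)) (h q hlt)
  have hr : r ≤ 2 ^ r.toNat := by
    have : (r.toNat : ℤ) < 2 ^ r.toNat := by exact_mod_cast Nat.lt_two_pow_self
    omega
  simpa [min_eq_left hr] using hq r.toNat

theorem HVanishes.exists_mem_map_eq (hd : ∀ n, ∀ x ∈ G n, d x ∈ G (n + 1))
    (hdd : ∀ x, d (d x) = 0) (h : HVanishes d G F i a b) {x : M} (hx : x ∈ F a ⊓ G i)
    (hdx : d x ∈ F b) : ∃ x' ∈ F b ⊓ G i, d x' = d x := by
  obtain ⟨y, ⟨-, hyG⟩, hxy⟩ := h x hx hdx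
  exact ⟨x - d y, ⟨hxy, sub_map_mem_of_mem_pred hd hx.2 hyG⟩, by simp [hdd]⟩

end HVanishes

theorem StarCondition.exists_approx {𝕂 M N : Type*} [Field 𝕂]
    [AddCommGroup M] [Module 𝕂 M] [AddCommGroup N] [Module 𝕂 N]
    {r : ℤ} {dM : M →ₗ[𝕂] M} {dN : N →ₗ[𝕂] N} {ψ : M →ₗ[𝕂] N}
    {G : ℤ → Submodule 𝕂 M} {G' : ℤ → Submodule 𝕂 N}
    {F : ℤ → Submodule 𝕂 M} {F' : ℤ → Submodule 𝕂 N}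
    (hstar : StarCondition 𝕂 r dM dN ψ G G' F F') {b : N} (hb : b ∈ F' r ⊓ G' 0)
    (hdb : dN b ∈ F' (2 * r)) :
    ∃ x ∈ F 1 ⊓ G 0, ∃ y ∈ F' 1 ⊓ G' (-1),
      dM x ∈ F (r + 1) ∧ ψ x - dN y ∈ F' r ∧ b - ψ x + dN y ∈ F' (r + 1) := by
  obtain ⟨x, hx, y, hy, -, hψxy, hdx, hbxy⟩ := hstar r 1 0 (zero_mem _) b (by simpa using hb)
    (by simp) (by simpa [two_mul] using neg_mem hdb)
  norm_num at hx hy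
  exact ⟨x, hx, y, hy, by simpa using neg_mem hdx, hψxy, hbxy⟩

theorem goldman_millson_stmt5_general
    (𝕂 : Type*) [Field 𝕂]
    (M N : Type*) [AddCommGroup M] [Module 𝕂 M] [AddCommGroup N] [Module 𝕂 N]
    (G : ℤ → Submodule 𝕂 M) (G' : ℤ → Submodule 𝕂 N)
    (dM : M →ₗ[𝕂] M) (dN : N →ₗ[𝕂] N)
    (hdM_deg : ∀ n : ℤ, ∀ x ∈ G n, dM x ∈ G (n + 1))
    (hdN_deg : ∀ n : ℤ, ∀ x ∈ G' n, dN x ∈ G' (n + 1))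
    (hdMdM : ∀ x : M, dM (dM x) = 0) (hdNdN : ∀ x : N, dN (dN x) = 0)
    (F : ℤ → Submodule 𝕂 M) (F' : ℤ → Submodule 𝕂 N)
    (hF_anti : Antitone F)
    -- ψ : a filtration-preserving chain map of degree 0
    (ψ : M →ₗ[𝕂] N)
    (hψ_deg : ∀ n : ℤ, ∀ x ∈ G n, ψ x ∈ G' n)
    (hψ_chain : ∀ x : M, ψ (dM x) = dN (ψ x))
    (hψ_filt : ∀ p : ℤ, ∀ x ∈ F p, ψ x ∈ F' p)
    -- the fixed integer r ≥ 1, and ψ satisfies (★_r)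
    (r : ℤ)
    (hstar : StarCondition 𝕂 r dM dN ψ G G' F F')
    -- H⁰((F_{2^q}L)/(F_{min(r,2^{q+1})}L)) = 0 for every q with 2^q < r
    (hH0 : ∀ q : ℕ, (2 : ℤ) ^ q < r →
      ∀ x ∈ F ((2 : ℤ) ^ q) ⊓ G 0, dM x ∈ F (min r ((2 : ℤ) ^ (q + 1))) →
        ∃ y ∈ F ((2 : ℤ) ^ q) ⊓ G (-1), x - dM y ∈ F (min r ((2 : ℤ) ^ (q + 1))))
    -- H⁻¹((F₁L̃)/(F_rL̃)) = 0
    (hHneg1 : ∀ x ∈ F' 1 ⊓ G' (-1), dN x ∈ F' r →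
      ∃ y ∈ F' 1 ⊓ G' (-2), x - dN y ∈ F' r) :
    ∀ b ∈ F' r ⊓ G' 0, dN b ∈ F' (2 * r) →
      ∃ a ∈ F r ⊓ G 0, dM a ∈ F (r + 1) ∧
        ∃ y ∈ F' r ⊓ G' (-1), b - ψ a + dN y ∈ F' (r + 1) := by
  intro b hb hdb
  obtain ⟨x, ⟨hxF, hxG⟩, y, ⟨hyF, hyG⟩, hdx, hψxy, hbxy⟩ := hstar.exists_approx hb hdb
  have hH0_one : HVanishes dM G F 0 1 r := .one_of_dyadic hF_anti hdM_deg hdMdM hH0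
  obtain ⟨y₀, ⟨hy₀F, hy₀G⟩, ha⟩ := hH0_one x ⟨hxF, hxG⟩ (hF_anti (by omega) hdx)
  have hw₀ : y - ψ y₀ ∈ F' 1 ⊓ G' (-1) :=
    ⟨sub_mem hyF (hψ_filt _ _ hy₀F), sub_mem hyG (hψ_deg _ _ hy₀G)⟩
  have hψa : ψ (x - dM y₀) - dN (y - ψ y₀) = ψ x - dN y := by
    simp only [map_sub, hψ_chain]; abel
  have hdw : dN (y - ψ y₀) ∈ F' r := by
    have := sub_mem (hψ_filt _ _ ha) hψxy
    rwa [← hψa, sub_sub_cancel] at this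
  obtain ⟨w, hw, hdw'⟩ := (show HVanishes dN G' F' (-1) 1 r from hHneg1).exists_mem_map_eq
    hdN_deg hdNdN hw₀ hdw
  refine ⟨x - dM y₀, ⟨ha, sub_map_mem_of_mem_pred hdM_deg hxG hy₀G⟩, by simpa [hdMdM] using hdx,
    w, hw, ?_⟩
  rwa [hdw', sub_add, hψa, ← sub_add]

/-- the base of induction in the surjectivity part of
Theorem 5.1 of the paper. Let `ψ : L → L̃` be a filtration-preserving chain
map satisfying `(★_r)`, with `H⁰((F_{2^q}L)/(F_{min(r,2^{q+1})}L)) = 0` for all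
`2^q < r` and `H⁻¹((F₁L̃)/(F_rL̃)) = 0`. Then every `b ∈ F_rL̃⁰` with
`d_{L̃} b ∈ F_{2r}L̃¹` admits `a ∈ F_rL⁰` with `d_L a ∈ F_{r+1}L¹` and
`y ∈ F_rL̃⁻¹` such that `b - ψ a + d_{L̃} y ∈ F_{r+1}L̃⁰`. -/
theorem goldman_millson_stmt5
    (𝕂 : Type*) [Field 𝕂]
    (M N : Type*) [AddCommGroup M] [Module 𝕂 M] [AddCommGroup N] [Module 𝕂 N]
    (G : ℤ → Submodule 𝕂 M) (G' : ℤ → Submodule 𝕂 N)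
    (hG : DirectSum.IsInternal G) (hG' : DirectSum.IsInternal G')
    (dM : M →ₗ[𝕂] M) (dN : N →ₗ[𝕂] N)
    (hdM_deg : ∀ n : ℤ, ∀ x ∈ G n, dM x ∈ G (n + 1))
    (hdN_deg : ∀ n : ℤ, ∀ x ∈ G' n, dN x ∈ G' (n + 1))
    (hdMdM : ∀ x : M, dM (dM x) = 0) (hdNdN : ∀ x : N, dN (dN x) = 0)
    (F : ℤ → Submodule 𝕂 M) (F' : ℤ → Submodule 𝕂 N)
    (hF_anti : Antitone F) (hF'_anti : Antitone F')
    (hF_top : ∀ p : ℤ, p ≤ 1 → F p = ⊤) (hF'_top : ∀ p : ℤ, p ≤ 1 → F' p = ⊤)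
    (hF_graded : ∀ p : ℤ, F p = ⨆ n : ℤ, F p ⊓ G n)
    (hF'_graded : ∀ p : ℤ, F' p = ⨆ n : ℤ, F' p ⊓ G' n)
    (hdF : ∀ p : ℤ, ∀ x ∈ F p, dM x ∈ F p)
    (hdF' : ∀ p : ℤ, ∀ x ∈ F' p, dN x ∈ F' p)
    -- ψ : a filtration-preserving chain map of degree 0
    (ψ : M →ₗ[𝕂] N)
    (hψ_deg : ∀ n : ℤ, ∀ x ∈ G n, ψ x ∈ G' n)
    (hψ_chain : ∀ x : M, ψ (dM x) = dN (ψ x))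
    (hψ_filt : ∀ p : ℤ, ∀ x ∈ F p, ψ x ∈ F' p)
    -- the fixed integer r ≥ 1, and ψ satisfies (★_r)
    (r : ℤ) (hr : 1 ≤ r)
    (hstar : StarCondition 𝕂 r dM dN ψ G G' F F')
    -- H⁰((F_{2^q}L)/(F_{min(r,2^{q+1})}L)) = 0 for every q with 2^q < r
    (hH0 : ∀ q : ℕ, (2 : ℤ) ^ q < r →
      ∀ x ∈ F ((2 : ℤ) ^ q) ⊓ G 0, dM x ∈ F (min r ((2 : ℤ) ^ (q + 1))) →
        ∃ y ∈ F ((2 : ℤ) ^ q) ⊓ G (-1), x - dM y ∈ F (min r ((2 : ℤ) ^ (q + 1))))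
    -- H⁻¹((F₁L̃)/(F_rL̃)) = 0
    (hHneg1 : ∀ x ∈ F' 1 ⊓ G' (-1), dN x ∈ F' r →
      ∃ y ∈ F' 1 ⊓ G' (-2), x - dN y ∈ F' r) :
    ∀ b ∈ F' r ⊓ G' 0, dN b ∈ F' (2 * r) →
      ∃ a ∈ F r ⊓ G 0, dM a ∈ F (r + 1) ∧
        ∃ y ∈ F' r ⊓ G' (-1), b - ψ a + dN y ∈ F' (r + 1) :=
  goldman_millson_stmt5_general 𝕂 M N G G' dM dN hdM_deg hdN_deg hdMdM hdNdN F F' hF_anti ψ hψ_deg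
    hψ_chain hψ_filt r hstar hH0 hHneg1
end

section
/- Let L and L̃ be ℤ-graded 𝕂-vector spaces equipped with descending, bounded above filtrations by graded subspaces, and fix an integer r ≥ 1. Let d_L and d_L′ be two filtration-preserving differentials on L, let d_{L̃} and d_{L̃}′ be two filtration-preserving differentials on L̃, and let ψ, ψ′: L → L̃ be two filtration-preserving 𝕂-linear maps of degree 0 that intertwine the respective differentials (ψ ∘ d_L = d_{L̃} ∘ ψ and ψ′ ∘ d_L′ = d_{L̃}′ ∘ ψ′). Assume that for all integers p, n one has (d_L − d_L′)(FₚLⁿ) ⊆ F_{p+r}L, (d_{L̃} − d_{L̃}′)(FₚL̃ⁿ) ⊆ F_{p+r}L̃, and (ψ − ψ′)(FₚLⁿ) ⊆ F_{p+r}L̃. Then ψ satisfies condition (★_r) with respect to (d_L, d_{L̃}) if and only if ψ′ satisfies condition (★_r) with respect to (d_L′, d_{L̃}′). -/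
lemma starCondition_perturb (𝕂 : Type*) [Field 𝕂] {M N : Type*}
    [AddCommGroup M] [Module 𝕂 M] [AddCommGroup N] [Module 𝕂 N]
    (G : ℤ → Submodule 𝕂 M) (G' : ℤ → Submodule 𝕂 N)
    (F : ℤ → Submodule 𝕂 M) (F' : ℤ → Submodule 𝕂 N)
    (hF_anti : Antitone F) (hF'_anti : Antitone F')
    (r : ℤ)
    (dM dM' : M →ₗ[𝕂] M) (dN dN' : N →ₗ[𝕂] N) (ψ ψ' : M →ₗ[𝕂] N)
    (hdM_close : ∀ p n : ℤ, ∀ x ∈ F p ⊓ G n, dM x - dM' x ∈ F (p + r))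
    (hdN_close : ∀ p n : ℤ, ∀ x ∈ F' p ⊓ G' n, dN x - dN' x ∈ F' (p + r))
    (hψ_close : ∀ p n : ℤ, ∀ x ∈ F p ⊓ G n, ψ x - ψ' x ∈ F' (p + r))
    (h : StarCondition 𝕂 r dM dN ψ G G' F F') :
    StarCondition 𝕂 r dM' dN' ψ' G G' F F' := by
  intro p n a ha b hb hda hpb
  have hda' : dM a ∈ F (p + r) := by
    have h1 := add_mem hda (hdM_close p n a ha)
    have e : dM' a + (dM a - dM' a) = dM a := by abel
    rwa [e] at h1
  have hpb' : ψ a - dN b ∈ F' (p + r) := by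
    have h1 := sub_mem (add_mem hpb (hψ_close p n a ha))
      (hdN_close p (n - 1) b hb)
    have e : ψ' a - dN' b + (ψ a - ψ' a) - (dN b - dN' b) = ψ a - dN b := by
      abel
    rwa [e] at h1
  obtain ⟨x, hx, y, hy, h1, h2, h3, h4⟩ := h p n a ha b hb hda' hpb'
  have ep : p - r + 1 + r = p + 1 := by ring
  have hsub : F (p + 1) ≤ F p := hF_anti (by linarith)
  have hsub' : F' (p + 1) ≤ F' p := hF'_anti (by linarith)
  have hdx : dM x - dM' x ∈ F (p + 1) := by
    have := hdM_close (p - r + 1) (n - 1) x hx; rwa [ep] at this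
  have hpx : ψ x - ψ' x ∈ F' (p + 1) := by
    have := hψ_close (p - r + 1) (n - 1) x hx; rwa [ep] at this
  have hdy : dN y - dN' y ∈ F' (p + 1) := by
    have := hdN_close (p - r + 1) (n - 2) y hy; rwa [ep] at this
  refine ⟨x, hx, y, hy, ?_, ?_, ?_, ?_⟩
  · have h5 := sub_mem h1 (hsub hdx)
    have e : dM x - (dM x - dM' x) = dM' x := by abel
    rwa [e] at h5
  · have h5 := add_mem (sub_mem h2 (hsub' hpx)) (hsub' hdy)
    have e : ψ x - dN y - (ψ x - ψ' x) + (dN y - dN' y) = ψ' x - dN' y := by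
      abel
    rwa [e] at h5
  · have h5 := add_mem h3 hdx
    have e : a - dM x + (dM x - dM' x) = a - dM' x := by abel
    rwa [e] at h5
  · have h5 := sub_mem (add_mem h4 hpx) hdy
    have e : b - ψ x + dN y + (ψ x - ψ' x) - (dN y - dN' y)
        = b - ψ' x + dN' y := by abel
    rwa [e] at h5

/-- (stability of condition `(★_r)` under perturbations that
raise the filtration degree by `r`; this is the linear content of the fact that
twisting by a Maurer–Cartan element of filtration degree `≥ r` preserves being
a quasi-isomorphism on the `(r-1)`-st page). -/
theorem goldman_millson_stmt6
    (𝕂 : Type*) [Field 𝕂]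
    (M N : Type*) [AddCommGroup M] [Module 𝕂 M] [AddCommGroup N] [Module 𝕂 N]
    -- the gradings
    (G : ℤ → Submodule 𝕂 M) (G' : ℤ → Submodule 𝕂 N)
    (hG : DirectSum.IsInternal G) (hG' : DirectSum.IsInternal G')
    -- the filtrations : descending, bounded above, by graded subspaces
    (F : ℤ → Submodule 𝕂 M) (F' : ℤ → Submodule 𝕂 N)
    (hF_anti : Antitone F) (hF'_anti : Antitone F')
    (hF_top : ∀ p : ℤ, p ≤ 1 → F p = ⊤) (hF'_top : ∀ p : ℤ, p ≤ 1 → F' p = ⊤)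
    (hF_graded : ∀ p : ℤ, F p = ⨆ n : ℤ, F p ⊓ G n)
    (hF'_graded : ∀ p : ℤ, F' p = ⨆ n : ℤ, F' p ⊓ G' n)
    -- the fixed integer r ≥ 1
    (r : ℤ) (hr : 1 ≤ r)
    -- two filtration-preserving differentials on L
    (dM dM' : M →ₗ[𝕂] M)
    (hdM_deg : ∀ n : ℤ, ∀ x ∈ G n, dM x ∈ G (n + 1))
    (hdM'_deg : ∀ n : ℤ, ∀ x ∈ G n, dM' x ∈ G (n + 1))
    (hdMdM : ∀ x : M, dM (dM x) = 0) (hdM'dM' : ∀ x : M, dM' (dM' x) = 0)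
    (hdMF : ∀ p : ℤ, ∀ x ∈ F p, dM x ∈ F p)
    (hdM'F : ∀ p : ℤ, ∀ x ∈ F p, dM' x ∈ F p)
    -- two filtration-preserving differentials on L̃
    (dN dN' : N →ₗ[𝕂] N)
    (hdN_deg : ∀ n : ℤ, ∀ x ∈ G' n, dN x ∈ G' (n + 1))
    (hdN'_deg : ∀ n : ℤ, ∀ x ∈ G' n, dN' x ∈ G' (n + 1))
    (hdNdN : ∀ x : N, dN (dN x) = 0) (hdN'dN' : ∀ x : N, dN' (dN' x) = 0)
    (hdNF' : ∀ p : ℤ, ∀ x ∈ F' p, dN x ∈ F' p)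
    (hdN'F' : ∀ p : ℤ, ∀ x ∈ F' p, dN' x ∈ F' p)
    -- two filtration-preserving degree-0 maps intertwining the differentials
    (ψ ψ' : M →ₗ[𝕂] N)
    (hψ_deg : ∀ n : ℤ, ∀ x ∈ G n, ψ x ∈ G' n)
    (hψ'_deg : ∀ n : ℤ, ∀ x ∈ G n, ψ' x ∈ G' n)
    (hψ_chain : ∀ x : M, ψ (dM x) = dN (ψ x))
    (hψ'_chain : ∀ x : M, ψ' (dM' x) = dN' (ψ' x))
    (hψ_filt : ∀ p : ℤ, ∀ x ∈ F p, ψ x ∈ F' p)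
    (hψ'_filt : ∀ p : ℤ, ∀ x ∈ F p, ψ' x ∈ F' p)
    -- the perturbations raise the filtration degree by r
    (hdM_close : ∀ p n : ℤ, ∀ x ∈ F p ⊓ G n, dM x - dM' x ∈ F (p + r))
    (hdN_close : ∀ p n : ℤ, ∀ x ∈ F' p ⊓ G' n, dN x - dN' x ∈ F' (p + r))
    (hψ_close : ∀ p n : ℤ, ∀ x ∈ F p ⊓ G n, ψ x - ψ' x ∈ F' (p + r)) :
    StarCondition 𝕂 r dM dN ψ G G' F F' ↔
      StarCondition 𝕂 r dM' dN' ψ' G G' F F' := by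
  constructor
  · exact fun h => starCondition_perturb 𝕂 G G' F F' hF_anti hF'_anti r
      dM dM' dN dN' ψ ψ' hdM_close hdN_close hψ_close h
  · refine fun h => starCondition_perturb 𝕂 G G' F F' hF_anti hF'_anti r
      dM' dM dN' dN ψ' ψ ?_ ?_ ?_ h
    · intro p n x hx
      have := neg_mem (hdM_close p n x hx); rwa [neg_sub] at this
    · intro p n x hx
      have := neg_mem (hdN_close p n x hx); rwa [neg_sub] at this
    · intro p n x hx
      have := neg_mem (hψ_close p n x hx); rwa [neg_sub] at this
end
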